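/- arXiv:1703.01509 — 5 statements merged into one kernel-verified Lean document; each statement's English description precedes it below -/
import Mathlib

section
/- If S : [0,T] → S^n is differentiable and satisfies -Ṡ(τ) + AᵀS(τ) + S(τ)A ⪯ 0 for all τ ∈ [0,T], then for every θ ∈ [0,T] one has e^{Aᵀθ} S(0) e^{Aθ} ⪯ S(θ). -/
/-! The congruence `F τ = e^{Aᵀ(θ-τ)} S(τ) e^{A(θ-τ)}` has derivative
`e^{Aᵀ(θ-τ)} (Ṡ(τ) - AᵀS(τ) - S(τ)A) e^{A(θ-τ)} ⪰ 0`, so each quadratic form `xᵀ F(τ) x` is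
nondecreasing on `[0, θ]`. Comparing its values at `τ = 0` and `τ = θ` gives the claim. -/

open Matrix NormedSpace Set

section BanachAlgebra

variable {𝔸 : Type*} [NormedRing 𝔸] [NormedAlgebra ℝ 𝔸] [CompleteSpace 𝔸]

theorem hasDerivAt_exp_sub_smul (A : 𝔸) (θ τ : ℝ) :
    HasDerivAt (fun t : ℝ => exp ((θ - t) • A)) (-(A * exp ((θ - τ) • A))) τ := by
  simpa [Function.comp_def] using
    (hasDerivAt_exp_smul_const' A (θ - τ)).scomp τ ((hasDerivAt_id τ).const_sub θ)

theorem hasDerivAt_exp_sub_smul_mul_mul_exp_sub_smul {S : ℝ → 𝔸} {S' : 𝔸} {τ : ℝ}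
    (hS : HasDerivAt S S' τ) (A B : 𝔸) (θ : ℝ) :
    HasDerivAt (fun t => exp ((θ - t) • B) * S t * exp ((θ - t) • A))
      (exp ((θ - τ) • B) * (S' - B * S τ - S τ * A) * exp ((θ - τ) • A)) τ := by
  have hcomm : B * exp ((θ - τ) • B) = exp ((θ - τ) • B) * B :=
    ((Commute.refl B).smul_right _).exp_right.eq
  convert ((hasDerivAt_exp_sub_smul B θ τ).fun_mul hS).fun_mul (hasDerivAt_exp_sub_smul A θ τ)
    using 1
  rw [hcomm]
  noncomm_ring

end BanachAlgebra

namespace Matrix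

variable {ι : Type*} [Fintype ι]

theorem posSemidef_sub_of_hasDerivAt {F F' : ℝ → Matrix ι ι ℝ} {a b : ℝ} (hab : a ≤ b)
    (hF : ∀ τ ∈ Icc a b, HasDerivAt F (F' τ) τ) (hF' : ∀ τ ∈ Icc a b, (F' τ).PosSemidef)
    (hherm : (F b - F a).IsHermitian) : (F b - F a).PosSemidef := by
  classical
  -- `HasDerivAt` only sees the topology of `Matrix`, so any norm inducing it will do.
  let := Matrix.normedAddCommGroup (m := ι) (n := ι) (α := ℝ)
  let := Matrix.normedSpace (m := ι) (n := ι) (R := ℝ) (α := ℝ)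
  refine posSemidef_iff_dotProduct_mulVec.mpr ⟨hherm, fun x => ?_⟩
  let q : Matrix ι ι ℝ →L[ℝ] ℝ :=
    LinearMap.toContinuousLinearMap (((toLinearMap₂' ℝ).toLinearMap.flip x).flip x)
  have hq : ∀ M, q M = x ⬝ᵥ M *ᵥ x := fun M => toLinearMap₂'_apply' M x x
  have hqF : ∀ τ ∈ Icc a b, HasDerivAt (fun t => q (F t)) (q (F' τ)) τ := fun τ hτ =>
    q.hasFDerivAt.comp_hasDerivAt τ (hF τ hτ)
  have hmono : MonotoneOn (fun t => q (F t)) (Icc a b) :=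
    monotoneOn_of_hasDerivWithinAt_nonneg (convex_Icc a b)
      (fun τ hτ => (hqF τ hτ).continuousAt.continuousWithinAt)
      (fun τ hτ => (hqF τ (interior_subset hτ)).hasDerivWithinAt)
      (fun τ hτ => by simpa [hq] using (hF' τ (interior_subset hτ)).dotProduct_mulVec_nonneg x)
  have := hmono (left_mem_Icc.2 hab) (right_mem_Icc.2 hab) hab
  simpa [hq, sub_mulVec, dotProduct_sub] using this

theorem posSemidef_sub_exp_smul_transpose_mul_mul_exp_smul [DecidableEq ι]
    {A : Matrix ι ι ℝ} {S S' : ℝ → Matrix ι ι ℝ} {θ : ℝ} (hθ : 0 ≤ θ)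
    (hS : ∀ τ ∈ Icc 0 θ, HasDerivAt S (S' τ) τ)
    (hS₀ : (S 0).IsHermitian) (hSθ : (S θ).IsHermitian)
    (hL : ∀ τ ∈ Icc 0 θ, (S' τ - Aᵀ * S τ - S τ * A).PosSemidef) :
    (S θ - exp (θ • Aᵀ) * S 0 * exp (θ • A)).PosSemidef := by
  have hexp : ∀ t : ℝ, exp (t • Aᵀ) = (exp (t • A))ᴴ := fun t => by
    rw [conjTranspose_eq_transpose_of_trivial, ← exp_transpose, transpose_smul]
  have hherm : (S θ - exp (θ • Aᵀ) * S 0 * exp (θ • A)).IsHermitian :=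
    hSθ.sub (hexp θ ▸ isHermitian_conjTranspose_mul_mul _ hS₀)
  have hconj : ∀ τ ∈ Icc 0 θ,
      (exp ((θ - τ) • Aᵀ) * (S' τ - Aᵀ * S τ - S τ * A) * exp ((θ - τ) • A)).PosSemidef :=
    fun τ hτ => hexp (θ - τ) ▸ (hL τ hτ).conjTranspose_mul_mul_same _
  have hF : ∀ τ ∈ Icc 0 θ, HasDerivAt (fun t => exp ((θ - t) • Aᵀ) * S t * exp ((θ - t) • A))
      (exp ((θ - τ) • Aᵀ) * (S' τ - Aᵀ * S τ - S τ * A) * exp ((θ - τ) • A)) τ := by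
    -- The `L∞` operator norm makes `Matrix ι ι ℝ` a Banach algebra.
    let := Matrix.linftyOpNormedRing (n := ι) (α := ℝ)
    let := Matrix.linftyOpNormedAlgebra (n := ι) (R := ℝ) (α := ℝ)
    exact fun τ hτ => hasDerivAt_exp_sub_smul_mul_mul_exp_sub_smul (hS τ hτ) A Aᵀ θ
  simpa using posSemidef_sub_of_hasDerivAt hθ hF hconj (by simpa using hherm)

end Matrix

attribute [local instance] Matrix.normedAddCommGroup Matrix.normedSpace

theorem stmt0_general {n : ℕ} (T : ℝ)
    (A : Matrix (Fin n) (Fin n) ℝ)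
    (S S' : ℝ → Matrix (Fin n) (Fin n) ℝ)
    (hderiv : ∀ τ ∈ Icc (0 : ℝ) T, HasDerivAt S (S' τ) τ)
    (hsymm : ∀ τ ∈ Icc (0 : ℝ) T, (S τ).IsHermitian)
    (hLMI : ∀ τ ∈ Icc (0 : ℝ) T,
      (-( -(S' τ) + Aᵀ * S τ + S τ * A)).PosSemidef) :
    ∀ θ ∈ Icc (0 : ℝ) T,
      (S θ - NormedSpace.exp (θ • Aᵀ) * S 0 * NormedSpace.exp (θ • A)).PosSemidef := by
  intro θ hθ
  have hsub : Icc 0 θ ⊆ Icc 0 T := Icc_subset_Icc_right hθ.2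
  refine posSemidef_sub_exp_smul_transpose_mul_mul_exp_smul hθ.1
    (fun τ hτ => hderiv τ (hsub hτ)) (hsymm 0 (hsub (left_mem_Icc.2 hθ.1))) (hsymm θ hθ)
    fun τ hτ => ?_
  rw [show S' τ - Aᵀ * S τ - S τ * A = -(-S' τ + Aᵀ * S τ + S τ * A) by abel]
  exact hLMI τ (hsub hτ)

/-- If `S : [0,T] → 𝕊ⁿ` is differentiable and satisfies
`-Ṡ(τ) + AᵀS(τ) + S(τ)A ⪯ 0` on `[0,T]`, then for every `θ ∈ [0,T]`,
`e^{Aᵀθ} S(0) e^{Aθ} ⪯ S(θ)`. -/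
theorem stmt0 {n : ℕ} (T : ℝ) (hT : 0 ≤ T)
    (A : Matrix (Fin n) (Fin n) ℝ)
    (S S' : ℝ → Matrix (Fin n) (Fin n) ℝ)
    (hderiv : ∀ τ ∈ Icc (0 : ℝ) T, HasDerivAt S (S' τ) τ)
    (hsymm : ∀ τ ∈ Icc (0 : ℝ) T, (S τ).IsHermitian)
    (hLMI : ∀ τ ∈ Icc (0 : ℝ) T,
      (-( -(S' τ) + Aᵀ * S τ + S τ * A)).PosSemidef) :
    ∀ θ ∈ Icc (0 : ℝ) T,
      (S θ - NormedSpace.exp (θ • Aᵀ) * S 0 * NormedSpace.exp (θ • A)).PosSemidef :=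
  stmt0_general T A S S' hderiv hsymm hLMI
end

section
/- If S : [0,T] → S^n is differentiable and satisfies Ṡ(τ) + S(τ)Aᵀ + A S(τ) ⪯ 0 for all τ ∈ [0,T], then for every θ ∈ [0,T] one has e^{Aθ} S(θ) e^{Aᵀθ} ⪯ S(0). -/
open Matrix NormedSpace Set
attribute [local instance] Matrix.normedAddCommGroup Matrix.normedSpace

/-!
Conjugating by the flow, `Φ(τ) = e^{Aτ} S(τ) e^{Aᵀτ}` has derivative
`e^{Aτ} (Ṡ(τ) + A S(τ) + S(τ) Aᵀ) e^{Aᵀτ} ⪯ 0`. Hence every quadratic form `xᵀ Φ(τ) x` is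
antitone, so `Φ(θ) ⪯ Φ(0) = S(0)`.
-/

section Calculus

variable {m : Type*} [Fintype m] [DecidableEq m]

theorem HasDerivAt.matrix_mul {𝕜 : Type*} [NontriviallyNormedField 𝕜]
    {f g : 𝕜 → Matrix m m 𝕜} {f' g' : Matrix m m 𝕜} {t : 𝕜}
    (hf : HasDerivAt f f' t) (hg : HasDerivAt g g' t) :
    HasDerivAt (fun τ => f τ * g τ) (f' * g t + f t * g') t := by
  -- the submultiplicative L∞ operator norm induces the same topology, definitionally
  let := Matrix.linftyOpNormedRing (n := m) (α := 𝕜)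
  let := Matrix.linftyOpNormedAlgebra (n := m) (R := 𝕜) (α := 𝕜)
  exact hf.mul hg

variable {𝕂 : Type*} [RCLike 𝕂]

theorem hasDerivAt_exp_smul_matrix (A : Matrix m m 𝕂) (t : 𝕂) :
    HasDerivAt (fun τ : 𝕂 => exp (τ • A)) (A * exp (t • A)) t := by
  let := Matrix.linftyOpNormedRing (n := m) (α := 𝕂)
  let := Matrix.linftyOpNormedAlgebra (n := m) (R := 𝕂) (α := 𝕂)
  exact @hasDerivAt_exp_smul_const' _ _ _ _ _ (FiniteDimensional.complete 𝕂 _) A t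

theorem hasDerivAt_exp_smul_mul_mul_exp_smul (A B : Matrix m m 𝕂) {S : 𝕂 → Matrix m m 𝕂}
    {S' : Matrix m m 𝕂} {t : 𝕂} (hS : HasDerivAt S S' t) :
    HasDerivAt (fun τ => exp (τ • A) * S τ * exp (τ • B))
      (exp (t • A) * (S' + A * S t + S t * B) * exp (t • B)) t := by
  convert ((hasDerivAt_exp_smul_matrix A t).matrix_mul hS).matrix_mul
    (hasDerivAt_exp_smul_matrix B t) using 1
  rw [((Commute.refl A).smul_right t).exp_right.eq]
  noncomm_ring

end Calculus

section Loewner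

variable {m : Type*} [Fintype m]

theorem HasDerivAt.dotProduct_mulVec {Φ : ℝ → Matrix m m ℝ} {Φ' : Matrix m m ℝ} {t : ℝ}
    (hΦ : HasDerivAt Φ Φ' t) (x : m → ℝ) :
    HasDerivAt (fun τ => x ⬝ᵥ Φ τ *ᵥ x) (x ⬝ᵥ Φ' *ᵥ x) t := by
  let q : Matrix m m ℝ →ₗ[ℝ] ℝ :=
    { toFun := fun M => x ⬝ᵥ M *ᵥ x
      map_add' := fun M N => by simp only [add_mulVec, dotProduct_add]
      map_smul' := fun c M => by simp only [smul_mulVec, dotProduct_smul, RingHom.id_apply] }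
  exact q.toContinuousLinearMap.hasFDerivAt.comp_hasDerivAt t hΦ

theorem posSemidef_sub_of_hasDerivAt_of_posSemidef_neg {Φ Φ' : ℝ → Matrix m m ℝ} {a b : ℝ}
    (hab : a ≤ b) (hΦ : ∀ t ∈ Icc a b, HasDerivAt Φ (Φ' t) t)
    (hΦ' : ∀ t ∈ Icc a b, (-Φ' t).PosSemidef) (hherm : (Φ a - Φ b).IsHermitian) :
    (Φ a - Φ b).PosSemidef := by
  refine posSemidef_iff_dotProduct_mulVec.2 ⟨hherm, fun x => ?_⟩
  have hq : ∀ t ∈ Icc a b, HasDerivAt (fun τ => x ⬝ᵥ Φ τ *ᵥ x) (x ⬝ᵥ Φ' t *ᵥ x) t :=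
    fun t ht => (hΦ t ht).dotProduct_mulVec x
  have hanti : AntitoneOn (fun τ => x ⬝ᵥ Φ τ *ᵥ x) (Icc a b) := by
    refine antitoneOn_of_hasDerivWithinAt_nonpos (convex_Icc a b)
      (fun t ht => (hq t ht).continuousAt.continuousWithinAt)
      (fun t ht => (hq t (interior_subset ht)).hasDerivWithinAt) fun t ht => ?_
    simpa [neg_mulVec] using (hΦ' t (interior_subset ht)).dotProduct_mulVec_nonneg x
  simpa [sub_mulVec] using hanti ⟨le_rfl, hab⟩ ⟨hab, le_rfl⟩ hab

end Loewner

theorem stmt1_general {n : ℕ} (T : ℝ)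
    (A : Matrix (Fin n) (Fin n) ℝ)
    (S S' : ℝ → Matrix (Fin n) (Fin n) ℝ)
    (hderiv : ∀ τ ∈ Icc (0 : ℝ) T, HasDerivAt S (S' τ) τ)
    (hsymm : ∀ τ ∈ Icc (0 : ℝ) T, (S τ).IsHermitian)
    (hLMI : ∀ τ ∈ Icc (0 : ℝ) T,
      (-(S' τ + S τ * Aᵀ + A * S τ)).PosSemidef) :
    ∀ θ ∈ Icc (0 : ℝ) T,
      (S 0 - NormedSpace.exp (θ • A) * S θ * NormedSpace.exp (θ • Aᵀ)).PosSemidef := by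
  intro θ ⟨hθ0, hθT⟩
  have hsub : Icc 0 θ ⊆ Icc 0 T := Icc_subset_Icc_right hθT
  have hexpT : ∀ τ : ℝ, exp (τ • Aᵀ) = (exp (τ • A))ᴴ := fun τ => by
    rw [conjTranspose_eq_transpose_of_trivial, ← transpose_smul, exp_transpose]
  set Φ : ℝ → Matrix (Fin n) (Fin n) ℝ := fun τ => exp (τ • A) * S τ * exp (τ • Aᵀ)
  have hΦ0 : Φ 0 = S 0 := by simp [Φ]
  rw [← hΦ0]
  refine posSemidef_sub_of_hasDerivAt_of_posSemidef_neg hθ0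
    (fun t ht => hasDerivAt_exp_smul_mul_mul_exp_smul A Aᵀ (hderiv t (hsub ht)))
    (fun t ht => ?_) ?_
  · rw [hexpT]
    convert (hLMI t (hsub ht)).mul_mul_conjTranspose_same (exp (t • A)) using 1
    noncomm_ring
  · have hconj := isHermitian_mul_mul_conjTranspose (exp (θ • A)) (hsymm θ ⟨hθ0, hθT⟩)
    rw [← hexpT] at hconj
    rw [hΦ0]
    exact (hsymm 0 ⟨le_rfl, hθ0.trans hθT⟩).sub hconj

/-- If `S : [0,T] → 𝕊ⁿ` is differentiable and satisfies
`Ṡ(τ) + S(τ)Aᵀ + A S(τ) ⪯ 0` on `[0,T]`, then for every `θ ∈ [0,T]`,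
`e^{Aθ} S(θ) e^{Aᵀθ} ⪯ S(0)`. -/
theorem stmt1 {n : ℕ} (T : ℝ) (hT : 0 ≤ T)
    (A : Matrix (Fin n) (Fin n) ℝ)
    (S S' : ℝ → Matrix (Fin n) (Fin n) ℝ)
    (hderiv : ∀ τ ∈ Icc (0 : ℝ) T, HasDerivAt S (S' τ) τ)
    (hsymm : ∀ τ ∈ Icc (0 : ℝ) T, (S τ).IsHermitian)
    (hLMI : ∀ τ ∈ Icc (0 : ℝ) T,
      (-(S' τ + S τ * Aᵀ + A * S τ)).PosSemidef) :
    ∀ θ ∈ Icc (0 : ℝ) T,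
      (S 0 - NormedSpace.exp (θ • A) * S θ * NormedSpace.exp (θ • Aᵀ)).PosSemidef :=
  stmt1_general T A S S' hderiv hsymm hLMI
end

section
/- Let P₁,…,P_N be positive definite symmetric n×n matrices, Π ∈ ℝ^{N×N} be entrywise nonnegative with columns summing to one (1ᵀΠ = 1ᵀ), and G₁,…,G_N ∈ ℝ^{n×n}. Suppose Gᵢᵀ(Σⱼ π_{ji} P_j)Gᵢ - P_i ≺ 0 for all i. Define V(x) = minᵢ xᵀP_i x. Then for every x ≠ 0, choosing σ(x) = argminᵢ xᵀP_i x and any index i with x in the region where V(x) = xᵀP_i x, one has V(G_i x) < V(x). -/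
open Matrix Set

/-!
Convexity of the minimum: `V (Gᵢ x) = minⱼ (Gᵢ x)ᵀ Pⱼ (Gᵢ x)` is at most the average of these
quadratic forms with the weights `π_{ji}` of the `i`-th column of `Π`, which is the quadratic form
of `Gᵢᵀ (∑ⱼ π_{ji} Pⱼ) Gᵢ` at `x`. The Lyapunov–Metzler inequality makes the latter smaller than
`xᵀ Pᵢ x = V x`.
-/

lemma ciInf_le_sum_mul {ι : Type*} [Fintype ι] {w : ι → ℝ} (hw₀ : ∀ j, 0 ≤ w j)
    (hw₁ : ∑ j, w j = 1) (f : ι → ℝ) : ⨅ j, f j ≤ ∑ j, w j * f j :=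
  calc ⨅ j, f j = ∑ j, w j * ⨅ k, f k := by rw [← Finset.sum_mul, hw₁, one_mul]
    _ ≤ ∑ j, w j * f j := Finset.sum_le_sum fun j _ ↦
        mul_le_mul_of_nonneg_left (ciInf_le (Set.finite_range f).bddBelow j) (hw₀ j)

namespace Matrix

variable {ι m n α : Type*} [Fintype m] [Fintype n]

lemma dotProduct_sum_smul_mulVec [CommSemiring α] (s : Finset ι) (w : ι → α)
    (A : ι → Matrix m n α) (x : m → α) (y : n → α) :
    x ⬝ᵥ ((∑ j ∈ s, w j • A j) *ᵥ y) = ∑ j ∈ s, w j * (x ⬝ᵥ (A j *ᵥ y)) := by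
  simp only [sum_mulVec, dotProduct_sum, smul_mulVec, dotProduct_smul, smul_eq_mul]

lemma dotProduct_transpose_mul_mul_mulVec [CommSemiring α] (G : Matrix m n α)
    (Q : Matrix m m α) (x : n → α) :
    x ⬝ᵥ ((Gᵀ * Q * G) *ᵥ x) = (G *ᵥ x) ⬝ᵥ (Q *ᵥ (G *ᵥ x)) := by
  rw [← mulVec_mulVec, ← mulVec_mulVec, dotProduct_transpose_mulVec, dotProduct_comm]

lemma PosDef.dotProduct_mulVec_lt_of_sub [Ring α] [PartialOrder α] [StarRing α]
    [IsOrderedAddMonoid α] {A B : Matrix n n α} (h : (A - B).PosDef) {x : n → α} (hx : x ≠ 0) :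
    star x ⬝ᵥ (B *ᵥ x) < star x ⬝ᵥ (A *ᵥ x) := by
  have := h.dotProduct_mulVec_pos hx
  rwa [sub_mulVec, dotProduct_sub, sub_pos] at this

end Matrix

theorem stmt3_general {n N : ℕ}
    (P : Fin N → Matrix (Fin n) (Fin n) ℝ)
    (Pm : Matrix (Fin N) (Fin N) ℝ)
    (hPmnonneg : ∀ j i, 0 ≤ Pm j i)
    (hPmcol : ∀ i, (∑ j, Pm j i) = 1)
    (G : Fin N → Matrix (Fin n) (Fin n) ℝ)
    (hLM : ∀ i, (P i - (G i)ᵀ * (∑ j, Pm j i • P j) * G i).PosDef)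
    (V : (Fin n → ℝ) → ℝ)
    (hV : ∀ x, V x = ⨅ i : Fin N, x ⬝ᵥ (P i *ᵥ x)) :
    ∀ x : Fin n → ℝ, x ≠ 0 → ∀ i : Fin N,
      V x = x ⬝ᵥ (P i *ᵥ x) → V (G i *ᵥ x) < V x := by
  intro x hx i hVi
  set y := G i *ᵥ x
  calc V y = ⨅ j, y ⬝ᵥ (P j *ᵥ y) := hV y
    _ ≤ ∑ j, Pm j i * (y ⬝ᵥ (P j *ᵥ y)) := ciInf_le_sum_mul (hPmnonneg · i) (hPmcol i) _
    _ = x ⬝ᵥ (((G i)ᵀ * (∑ j, Pm j i • P j) * G i) *ᵥ x) := by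
        rw [dotProduct_transpose_mul_mul_mulVec, dotProduct_sum_smul_mulVec]
    _ < x ⬝ᵥ (P i *ᵥ x) := by
        simpa only [star_trivial] using (hLM i).dotProduct_mulVec_lt_of_sub hx
    _ = V x := hVi.symm

/-- One-step decrease of the min-of-quadratics Lyapunov function under the
discrete-time Lyapunov–Metzler condition. -/
theorem stmt3 {n N : ℕ} [NeZero N]
    (P : Fin N → Matrix (Fin n) (Fin n) ℝ)
    (hP : ∀ i, (P i).PosDef)
    (Pm : Matrix (Fin N) (Fin N) ℝ)
    (hPmnonneg : ∀ j i, 0 ≤ Pm j i)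
    (hPmcol : ∀ i, (∑ j, Pm j i) = 1)
    (G : Fin N → Matrix (Fin n) (Fin n) ℝ)
    (hLM : ∀ i, (P i - (G i)ᵀ * (∑ j, Pm j i • P j) * G i).PosDef)
    (V : (Fin n → ℝ) → ℝ)
    (hV : ∀ x, V x = ⨅ i : Fin N, x ⬝ᵥ (P i *ᵥ x)) :
    ∀ x : Fin n → ℝ, x ≠ 0 → ∀ i : Fin N,
      V x = x ⬝ᵥ (P i *ᵥ x) → V (G i *ᵥ x) < V x :=
  stmt3_general P Pm hPmnonneg hPmcol G hLM V hV
end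

section
/- Let P₁,…,P_N ∈ S^n be positive definite and Π ∈ ℝ^{N×N} nonnegative with 1ᵀΠ = 1ᵀ. If for all i and all θ ∈ [T_min, T_max], G_iᵀ e^{Aᵀθ}(Σⱼ π_{ji}P_j) e^{Aθ} G_i - P_i ≺ 0, then for any sequence of dwell times T_k ∈ [T_min,T_max] and any state sequence defined by χ_{k+1} = e^{A T_k} G_{σ_{k+1}} χ_k with the min-rule σ_{k+1} = σ(t_k^+) = argmin_i χ_kᵀ P_i χ_k (where χ_k = χ(t_k)), the function V(k) = min_i χ_kᵀ P_i χ_k is strictly decreasing along nonzero trajectories, hence χ_k → 0. -/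
open Matrix NormedSpace Set

private lemma quad_smul {n : ℕ} (M : Matrix (Fin n) (Fin n) ℝ) (c : ℝ) (x : Fin n → ℝ) :
    (c • x) ⬝ᵥ (M *ᵥ (c • x)) = c ^ 2 * (x ⬝ᵥ (M *ᵥ x)) := by
  rw [mulVec_smul, dotProduct_smul, smul_dotProduct, smul_eq_mul, smul_eq_mul]
  ring

private lemma quad_conj {n : ℕ} (B C : Matrix (Fin n) (Fin n) ℝ) (x : Fin n → ℝ) :
    x ⬝ᵥ ((Bᵀ * C * B) *ᵥ x) = (B *ᵥ x) ⬝ᵥ (C *ᵥ (B *ᵥ x)) := by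
  rw [← mulVec_mulVec, ← mulVec_mulVec, dotProduct_mulVec x Bᵀ, vecMul_transpose]

private lemma quad_sum {n N : ℕ} (c : Fin N → ℝ) (P : Fin N → Matrix (Fin n) (Fin n) ℝ)
    (x : Fin n → ℝ) :
    x ⬝ᵥ ((∑ j, c j • P j) *ᵥ x) = ∑ j, c j * (x ⬝ᵥ (P j *ᵥ x)) := by
  classical
  induction (Finset.univ : Finset (Fin N)) using Finset.induction with
  | empty => simp
  | insert a s h ih =>
    rw [Finset.sum_insert h, Finset.sum_insert h, add_mulVec, dotProduct_add, ih,
      smul_mulVec, dotProduct_smul, smul_eq_mul]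

private lemma posdef_quad_pos {n : ℕ} {M : Matrix (Fin n) (Fin n) ℝ} (hM : M.PosDef)
    {x : Fin n → ℝ} (hx : x ≠ 0) : 0 < x ⬝ᵥ (M *ᵥ x) := by
  simpa using hM.dotProduct_mulVec_pos hx

private lemma posdef_quad_nonneg {n : ℕ} {M : Matrix (Fin n) (Fin n) ℝ} (hM : M.PosDef)
    (x : Fin n → ℝ) : 0 ≤ x ⬝ᵥ (M *ᵥ x) := by
  simpa using hM.posSemidef.dotProduct_mulVec_nonneg x

private lemma f_identity {n N : ℕ} (A : Matrix (Fin n) (Fin n) ℝ)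
    (G : Fin N → Matrix (Fin n) (Fin n) ℝ) (P : Fin N → Matrix (Fin n) (Fin n) ℝ)
    (Pm : Matrix (Fin N) (Fin N) ℝ) (i : Fin N) (θ : ℝ) (x : Fin n → ℝ) :
    x ⬝ᵥ (((G i)ᵀ * (exp (θ • Aᵀ) * (∑ j, Pm j i • P j) * exp (θ • A)) * G i) *ᵥ x)
      = ∑ j, Pm j i *
          ((exp (θ • A) *ᵥ (G i *ᵥ x)) ⬝ᵥ (P j *ᵥ (exp (θ • A) *ᵥ (G i *ᵥ x)))) := by
  have hE : exp (θ • Aᵀ) = (exp (θ • A))ᵀ := by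
    rw [← transpose_smul, exp_transpose]
  have hB : (G i)ᵀ * (exp (θ • Aᵀ) * (∑ j, Pm j i • P j) * exp (θ • A)) * G i
      = (exp (θ • A) * G i)ᵀ * (∑ j, Pm j i • P j) * (exp (θ • A) * G i) := by
    rw [hE, transpose_mul]
    simp only [Matrix.mul_assoc]
  rw [hB, quad_conj, ← mulVec_mulVec, quad_sum]

private lemma cont_big {n : ℕ} (A S Gm Pmat : Matrix (Fin n) (Fin n) ℝ) :
    Continuous (fun p : ℝ × (Fin n → ℝ) =>
      p.2 ⬝ᵥ ((Pmat - Gmᵀ * (exp (p.1 • Aᵀ) * S * exp (p.1 • A)) * Gm) *ᵥ p.2)) := by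
  letI : NormedRing (Matrix (Fin n) (Fin n) ℝ) := Matrix.linftyOpNormedRing
  letI : NormedAlgebra ℝ (Matrix (Fin n) (Fin n) ℝ) := Matrix.linftyOpNormedAlgebra
  letI : NormedAlgebra ℚ (Matrix (Fin n) (Fin n) ℝ) :=
    NormedAlgebra.restrictScalars ℚ ℝ (Matrix (Fin n) (Fin n) ℝ)
  have hexp : ∀ B : Matrix (Fin n) (Fin n) ℝ, Continuous (fun θ : ℝ => exp (θ • B)) :=
    fun B => exp_continuous.comp (continuous_id.smul continuous_const)
  have hq : Continuous (fun p : Matrix (Fin n) (Fin n) ℝ × (Fin n → ℝ) =>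
      p.2 ⬝ᵥ (p.1 *ᵥ p.2)) := by
    simp only [dotProduct, mulVec, dotProduct]
    fun_prop
  have hM : Continuous (fun θ : ℝ =>
      Pmat - Gmᵀ * (exp (θ • Aᵀ) * S * exp (θ • A)) * Gm) := by
    apply Continuous.sub continuous_const
    exact (continuous_const.mul (((hexp Aᵀ).mul continuous_const).mul (hexp A))).mul
      continuous_const
  exact hq.comp ((hM.comp continuous_fst).prodMk continuous_snd)

/-- Proposition 1 (discrete-time core): under the range dwell-time
Lyapunov–Metzler condition, the min-jumping rule renders the closed-loop
sequence asymptotically stable, with strictly decreasing min-of-quadratics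
Lyapunov function. -/
theorem stmt4 {n N : ℕ} [NeZero N]
    (Tmin Tmax : ℝ) (hT : 0 < Tmin) (hTT : Tmin ≤ Tmax)
    (A : Matrix (Fin n) (Fin n) ℝ)
    (G : Fin N → Matrix (Fin n) (Fin n) ℝ)
    (P : Fin N → Matrix (Fin n) (Fin n) ℝ)
    (hP : ∀ i, (P i).PosDef)
    (Pm : Matrix (Fin N) (Fin N) ℝ)
    (hPmnonneg : ∀ j i, 0 ≤ Pm j i)
    (hPmcol : ∀ i, (∑ j, Pm j i) = 1)
    (hLM : ∀ i, ∀ θ ∈ Icc Tmin Tmax,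
      (P i - (G i)ᵀ * (exp (θ • Aᵀ) * (∑ j, Pm j i • P j) * exp (θ • A)) * G i).PosDef)
    (T : ℕ → ℝ) (hTk : ∀ k, T k ∈ Icc Tmin Tmax)
    (χ : ℕ → (Fin n → ℝ)) (σ : ℕ → Fin N)
    (hdyn : ∀ k, χ (k + 1) = exp (T k • A) *ᵥ (G (σ (k + 1)) *ᵥ χ k))
    (hrule : ∀ k i, χ k ⬝ᵥ (P (σ (k + 1)) *ᵥ χ k) ≤ χ k ⬝ᵥ (P i *ᵥ χ k)) :
    (∀ k, χ k ≠ 0 →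
      (⨅ i : Fin N, χ (k + 1) ⬝ᵥ (P i *ᵥ χ (k + 1))) <
        ⨅ i : Fin N, χ k ⬝ᵥ (P i *ᵥ χ k)) ∧
      Filter.Tendsto χ Filter.atTop (nhds 0) := by
  classical
  rcases Nat.eq_zero_or_pos n with hn | hn
  · subst hn
    have hzero : ∀ k, χ k = 0 := fun k => Subsingleton.elim _ _
    refine ⟨fun k hk => absurd (hzero k) hk, ?_⟩
    have : χ = fun _ => 0 := funext hzero
    rw [this]
    exact tendsto_const_nhds
  haveI : Nonempty (Fin n) := ⟨⟨0, hn⟩⟩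
  haveI : Nonempty (Fin N) := ⟨⟨0, Nat.pos_of_ne_zero (NeZero.ne N)⟩⟩
  -- abbreviation for the LM matrix
  set Fm : Fin N → ℝ → Matrix (Fin n) (Fin n) ℝ := fun i θ =>
    (G i)ᵀ * (exp (θ • Aᵀ) * (∑ j, Pm j i • P j) * exp (θ • A)) * G i with hFm
  -- nonnegativity of the Fm quadratic form
  have hFnn : ∀ i θ (x : Fin n → ℝ), 0 ≤ x ⬝ᵥ (Fm i θ *ᵥ x) := by
    intro i θ x
    rw [hFm, f_identity]
    exact Finset.sum_nonneg fun j _ =>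
      mul_nonneg (hPmnonneg j i) (posdef_quad_nonneg (hP j) _)
  -- compact set and a unit vector
  obtain ⟨u0, hu0⟩ : ∃ u : Fin n → ℝ, ‖u‖ = 1 := by
    obtain ⟨u, hu⟩ := NormedSpace.sphere_nonempty (x := (0 : Fin n → ℝ)) |>.mpr zero_le_one
    exact ⟨u, by simpa using hu⟩
  have hKc : IsCompact ((Icc Tmin Tmax) ×ˢ (Metric.sphere (0 : Fin n → ℝ) 1)) :=
    isCompact_Icc.prod (isCompact_sphere 0 1)
  have hKne : ((Icc Tmin Tmax) ×ˢ (Metric.sphere (0 : Fin n → ℝ) 1)).Nonempty :=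
    ⟨(Tmin, u0), ⟨left_mem_Icc.mpr hTT, by simpa using hu0⟩⟩
  -- per-mode uniform gap ε i on the compact set
  have hEexists : ∀ i : Fin N, ∃ e : ℝ, 0 < e ∧ ∀ θ ∈ Icc Tmin Tmax,
      ∀ x : Fin n → ℝ, ‖x‖ = 1 → e ≤ x ⬝ᵥ ((P i - Fm i θ) *ᵥ x) := by
    intro i
    obtain ⟨p0, hp0K, hp0min⟩ := hKc.exists_isMinOn hKne
      ((cont_big A (∑ j, Pm j i • P j) (G i) (P i)).continuousOn)
    refine ⟨p0.2 ⬝ᵥ ((P i - Fm i p0.1) *ᵥ p0.2), ?_, ?_⟩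
    · have hx0 : p0.2 ≠ 0 := by
        have : ‖p0.2‖ = 1 := by simpa using hp0K.2
        intro h; rw [h] at this; simp at this
      exact posdef_quad_pos (hLM i p0.1 hp0K.1) hx0
    · intro θ hθ x hx
      exact hp0min (Set.mk_mem_prod hθ (by simpa using hx))
  choose ε hεpos hεle using hEexists
  -- per-mode upper bound on the sphere
  have hCexists : ∀ i : Fin N, ∃ Ci : ℝ, ∀ x : Fin n → ℝ, ‖x‖ = 1 →
      x ⬝ᵥ (P i *ᵥ x) ≤ Ci := by
    intro i
    have hcont : Continuous (fun x : Fin n → ℝ => x ⬝ᵥ (P i *ᵥ x)) := by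
      simp only [dotProduct, mulVec, dotProduct]
      fun_prop
    obtain ⟨x0, hx0K, hx0max⟩ := (isCompact_sphere (0 : Fin n → ℝ) 1).exists_isMaxOn
      ⟨u0, by simpa using hu0⟩ hcont.continuousOn
    exact ⟨x0 ⬝ᵥ (P i *ᵥ x0), fun x hx => hx0max (by simpa using hx)⟩
  choose C hCle using hCexists
  set e : ℝ := Finset.univ.inf' Finset.univ_nonempty ε with he
  set Cm : ℝ := Finset.univ.sup' Finset.univ_nonempty C with hCm
  have hepos : 0 < e := by
    rw [he, Finset.lt_inf'_iff]
    exact fun i _ => hεpos i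
  have heleε : ∀ i, e ≤ ε i := fun i => Finset.inf'_le _ (Finset.mem_univ i)
  have hCleCm : ∀ i, C i ≤ Cm := fun i => Finset.le_sup' _ (Finset.mem_univ i)
  -- scaling helper
  have hscale : ∀ (M : Matrix (Fin n) (Fin n) ℝ) (x : Fin n → ℝ), x ≠ 0 →
      x ⬝ᵥ (M *ᵥ x) = ‖x‖ ^ 2 * ((‖x‖⁻¹ • x) ⬝ᵥ (M *ᵥ (‖x‖⁻¹ • x))) := by
    intro M x hx
    have hnx : ‖x‖ ≠ 0 := norm_ne_zero_iff.mpr hx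
    rw [quad_smul]
    field_simp
  have hunit : ∀ (x : Fin n → ℝ), x ≠ 0 → ‖(‖x‖⁻¹ • x)‖ = 1 := by
    intro x hx
    rw [norm_smul, norm_inv, norm_norm, inv_mul_cancel₀ (norm_ne_zero_iff.mpr hx)]
  -- coercivity: e‖x‖² ≤ xᵀ P i x
  have hcoer : ∀ i (x : Fin n → ℝ), e * ‖x‖ ^ 2 ≤ x ⬝ᵥ (P i *ᵥ x) := by
    intro i x
    rcases eq_or_ne x 0 with rfl | hx
    · simp
    · have h1 := hεle i Tmin (left_mem_Icc.mpr hTT) _ (hunit x hx)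
      have h2 := hFnn i Tmin (‖x‖⁻¹ • x)
      rw [sub_mulVec, dotProduct_sub] at h1
      have h3 : e ≤ (‖x‖⁻¹ • x) ⬝ᵥ (P i *ᵥ (‖x‖⁻¹ • x)) := by
        have := heleε i; linarith
      rw [hscale (P i) x hx]
      have hx2 : (0:ℝ) ≤ ‖x‖ ^ 2 := sq_nonneg _
      nlinarith
  -- upper bound: xᵀ P i x ≤ Cm‖x‖²
  have hupper : ∀ i (x : Fin n → ℝ), x ⬝ᵥ (P i *ᵥ x) ≤ Cm * ‖x‖ ^ 2 := by
    intro i x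
    rcases eq_or_ne x 0 with rfl | hx
    · simp
    · rw [hscale (P i) x hx]
      have h1 := (hCle i _ (hunit x hx)).trans (hCleCm i)
      have hx2 : (0:ℝ) ≤ ‖x‖ ^ 2 := sq_nonneg _
      nlinarith
  -- gap: xᵀ Fm x ≤ xᵀ P x − e‖x‖²
  have hgap : ∀ i, ∀ θ ∈ Icc Tmin Tmax, ∀ x : Fin n → ℝ,
      x ⬝ᵥ (Fm i θ *ᵥ x) ≤ x ⬝ᵥ (P i *ᵥ x) - e * ‖x‖ ^ 2 := by
    intro i θ hθ x
    rcases eq_or_ne x 0 with rfl | hx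
    · simp
    · have h1 := hεle i θ hθ _ (hunit x hx)
      rw [sub_mulVec, dotProduct_sub] at h1
      have h2 := heleε i
      rw [hscale (P i) x hx, hscale (Fm i θ) x hx]
      have hx2 : (0:ℝ) ≤ ‖x‖ ^ 2 := sq_nonneg _
      nlinarith
  have heCm : e ≤ Cm := by
    have h1 := hcoer ⟨0, Nat.pos_of_ne_zero (NeZero.ne N)⟩ u0
    have h2 := hupper ⟨0, Nat.pos_of_ne_zero (NeZero.ne N)⟩ u0
    rw [hu0] at h1 h2
    simpa using h1.trans h2
  have hCmpos : 0 < Cm := lt_of_lt_of_le hepos heCm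
  set lam : ℝ := 1 - e / Cm with hlam
  have hlam0 : 0 ≤ lam := by
    rw [hlam, sub_nonneg, div_le_one hCmpos]; exact heCm
  have hlam1 : lam < 1 := by
    rw [hlam]
    have : 0 < e / Cm := div_pos hepos hCmpos
    linarith
  -- contraction of quadratic forms
  have hcontr : ∀ i, ∀ θ ∈ Icc Tmin Tmax, ∀ x : Fin n → ℝ,
      x ⬝ᵥ (Fm i θ *ᵥ x) ≤ lam * (x ⬝ᵥ (P i *ᵥ x)) := by
    intro i θ hθ x
    have h1 := hgap i θ hθ x
    have h2 := hupper i x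
    have h3 : e / Cm * (x ⬝ᵥ (P i *ᵥ x)) ≤ e * ‖x‖ ^ 2 := by
      rw [div_mul_eq_mul_div, div_le_iff₀ hCmpos]
      nlinarith
    rw [hlam]
    nlinarith
  -- the Lyapunov function
  set V : ℕ → ℝ := fun k => ⨅ i : Fin N, χ k ⬝ᵥ (P i *ᵥ χ k) with hV
  have hbdd : ∀ k, BddBelow (Set.range fun i : Fin N => χ k ⬝ᵥ (P i *ᵥ χ k)) :=
    fun k => (Set.finite_range _).bddBelow
  have hVle : ∀ k i, V k ≤ χ k ⬝ᵥ (P i *ᵥ χ k) := fun k i => ciInf_le (hbdd k) i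
  have hVeq : ∀ k, V k = χ k ⬝ᵥ (P (σ (k+1)) *ᵥ χ k) :=
    fun k => le_antisymm (hVle k _) (le_ciInf (hrule k))
  have hVnn : ∀ k, 0 ≤ V k :=
    fun k => le_ciInf fun i => posdef_quad_nonneg (hP i) _
  -- one-step contraction of V
  have hstep : ∀ k, V (k+1) ≤ lam * V k := by
    intro k
    have h1 : V (k+1) ≤ ∑ j, Pm j (σ (k+1)) * (χ (k+1) ⬝ᵥ (P j *ᵥ χ (k+1))) := by
      calc V (k+1) = (∑ j, Pm j (σ (k+1))) * V (k+1) := by rw [hPmcol, one_mul]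
        _ = ∑ j, Pm j (σ (k+1)) * V (k+1) := by rw [Finset.sum_mul]
        _ ≤ _ := Finset.sum_le_sum fun j _ =>
            mul_le_mul_of_nonneg_left (hVle (k+1) j) (hPmnonneg j (σ (k+1)))
    have h2 : ∑ j, Pm j (σ (k+1)) * (χ (k+1) ⬝ᵥ (P j *ᵥ χ (k+1)))
        = χ k ⬝ᵥ (Fm (σ (k+1)) (T k) *ᵥ χ k) := by
      rw [hFm, f_identity]
      simp only [hdyn k]
    have h3 := hcontr (σ (k+1)) (T k) (hTk k) (χ k)
    rw [← hVeq k] at h3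
    linarith
  refine ⟨?_, ?_⟩
  · intro k hk
    have hVpos : 0 < V k := by
      rw [hVeq k]; exact posdef_quad_pos (hP _) hk
    have := hstep k
    have : lam * V k < V k := by nlinarith
    show V (k+1) < V k
    linarith [hstep k]
  · -- geometric decay
    have hgeo : ∀ k, V k ≤ lam ^ k * V 0 := by
      intro k
      induction k with
      | zero => simp
      | succ m ih =>
        calc V (m+1) ≤ lam * V m := hstep m
          _ ≤ lam * (lam ^ m * V 0) := mul_le_mul_of_nonneg_left ih hlam0
          _ = lam ^ (m+1) * V 0 := by ring
    have hpow : Filter.Tendsto (fun k => lam ^ k * V 0) Filter.atTop (nhds 0) := by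
      have := (tendsto_pow_atTop_nhds_zero_of_lt_one hlam0 hlam1).mul_const (V 0)
      simpa using this
    have hVt : Filter.Tendsto V Filter.atTop (nhds 0) :=
      tendsto_of_tendsto_of_tendsto_of_le_of_le tendsto_const_nhds hpow hVnn hgeo
    have hn2 : ∀ k, ‖χ k‖ ^ 2 ≤ V k / e := by
      intro k
      rw [le_div_iff₀ hepos]
      have h1 : e * ‖χ k‖ ^ 2 ≤ V k := le_ciInf fun i => hcoer i (χ k)
      linarith
    have hVdiv : Filter.Tendsto (fun k => V k / e) Filter.atTop (nhds 0) := by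
      have := hVt.div_const e
      simpa using this
    have hsq : Filter.Tendsto (fun k => ‖χ k‖ ^ 2) Filter.atTop (nhds 0) :=
      tendsto_of_tendsto_of_tendsto_of_le_of_le tendsto_const_nhds hVdiv
        (fun k => sq_nonneg _) hn2
    have hnorm : Filter.Tendsto (fun k => ‖χ k‖) Filter.atTop (nhds 0) := by
      have hc : Filter.Tendsto Real.sqrt (nhds 0) (nhds 0) := by
        simpa using (Real.continuous_sqrt.tendsto 0)
      have heq : (fun k => ‖χ k‖) = Real.sqrt ∘ (fun k => ‖χ k‖ ^ 2) :=
        funext fun k => (Real.sqrt_sq (norm_nonneg _)).symm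
      rw [heq]
      exact hc.comp hsq
    exact tendsto_zero_iff_norm_tendsto_zero.mpr hnorm
end

section
/- Let P ∈ S^n be positive definite, S : [0,T_max] → S^n differentiable with -Ṡ(τ) + AᵀS(τ) + S(τ)A ⪯ 0 on [0,T_max], Q ⪯ S(0) for a symmetric matrix Q, and suppose -P + JᵀS(θ)J + εI ⪯ 0 for some ε > 0 and all θ ∈ [T_min,T_max]. Then Jᵀ e^{Aᵀθ} Q e^{Aθ} J - P ≺ 0 for all θ ∈ [T_min,T_max]. -/
/-!
Along the flow `ẋ = A x`, the quadratic form `x(τ)ᵀ S(θ - τ) x(τ)` is nonincreasing by the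
differential LMI, which integrates to `e^{Aᵀθ} S(0) e^{Aθ} ⪯ S(θ)`. With `Q ⪯ S(0)` and a
congruence by `J`, this gives `P - Jᵀ e^{Aᵀθ} Q e^{Aθ} J ⪰ P - Jᵀ S(θ) J ⪰ ε I ≻ 0`.
-/

open Matrix NormedSpace Set

variable {m : Type*} [Fintype m]

section LinftyOpNorm

attribute [local instance] Matrix.linftyOpNormedAddCommGroup Matrix.linftyOpNormedRing
  Matrix.linftyOpNormedAlgebra

/- `exp` is differentiated in a normed algebra, but `HasDerivAt` only sees the product topology,
so the result does not depend on the operator norm chosen here. -/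
theorem Matrix.hasDerivAt_exp_smul {𝕂 : Type*} [RCLike 𝕂] [DecidableEq m] (A : Matrix m m 𝕂)
    (t : 𝕂) : HasDerivAt (fun τ : 𝕂 => exp (τ • A)) (A * exp (t • A)) t :=
  hasDerivAt_exp_smul_const' A t

end LinftyOpNorm

section Product

variable {𝕜 : Type*} [NontriviallyNormedField 𝕜]

theorem HasDerivAt.dotProduct {u v : 𝕜 → m → 𝕜} {u' v' : m → 𝕜} {t : 𝕜}
    (hu : HasDerivAt u u' t) (hv : HasDerivAt v v' t) :
    HasDerivAt (fun τ => u τ ⬝ᵥ v τ) (u' ⬝ᵥ v t + u t ⬝ᵥ v') t := by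
  have h := HasDerivAt.fun_sum fun i (_ : i ∈ Finset.univ) =>
    (hasDerivAt_pi.1 hu i).mul (hasDerivAt_pi.1 hv i)
  rwa [Finset.sum_add_distrib] at h

theorem HasDerivAt.mulVec {l : Type*} {M : 𝕜 → Matrix l m 𝕜} {M' : Matrix l m 𝕜}
    {v : 𝕜 → m → 𝕜} {v' : m → 𝕜} {t : 𝕜} (hM : HasDerivAt M M' t) (hv : HasDerivAt v v' t) :
    HasDerivAt (fun τ => M τ *ᵥ v τ) (M' *ᵥ v t + M t *ᵥ v') t :=
  hasDerivAt_pi.2 fun i => (hasDerivAt_pi.1 hM i).dotProduct hv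

end Product

variable [DecidableEq m]

theorem hasDerivAt_dotProduct_mulVec_exp_smul (A : Matrix m m ℝ) {R : ℝ → Matrix m m ℝ}
    {R' : Matrix m m ℝ} {t : ℝ} (hR : HasDerivAt R R' t) (y : m → ℝ) :
    HasDerivAt (fun τ => (exp (τ • A) *ᵥ y) ⬝ᵥ (R τ *ᵥ (exp (τ • A) *ᵥ y)))
      ((exp (t • A) *ᵥ y) ⬝ᵥ ((R' + Aᵀ * R t + R t * A) *ᵥ (exp (t • A) *ᵥ y))) t := by
  have hu : HasDerivAt (fun τ => exp (τ • A) *ᵥ y) (A *ᵥ (exp (t • A) *ᵥ y)) t := by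
    have h := (A.hasDerivAt_exp_smul t).mulVec (hasDerivAt_const t y)
    rwa [mulVec_zero, add_zero, ← mulVec_mulVec] at h
  refine (hu.dotProduct (hR.mulVec hu)).congr_deriv ?_
  simp only [add_mulVec, dotProduct_add, ← mulVec_mulVec, dotProduct_mulVec _ Aᵀ,
    vecMul_transpose]
  ring

theorem dotProduct_mulVec_exp_smul_le {A : Matrix m m ℝ} {R R' : ℝ → Matrix m m ℝ} {θ : ℝ}
    (hθ : 0 ≤ θ) (hR : ∀ τ ∈ Icc 0 θ, HasDerivAt R (R' τ) τ)
    (hLMI : ∀ τ ∈ Icc 0 θ, (-(R' τ + Aᵀ * R τ + R τ * A)).PosSemidef) (y : m → ℝ) :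
    (exp (θ • A) *ᵥ y) ⬝ᵥ (R θ *ᵥ (exp (θ • A) *ᵥ y)) ≤ y ⬝ᵥ (R 0 *ᵥ y) := by
  have hderiv := fun τ (hτ : τ ∈ Icc 0 θ) => hasDerivAt_dotProduct_mulVec_exp_smul A (hR τ hτ) y
  have hanti := antitoneOn_of_hasDerivWithinAt_nonpos (convex_Icc 0 θ)
    (fun τ hτ => (hderiv τ hτ).continuousAt.continuousWithinAt)
    (fun τ hτ => (hderiv τ (interior_subset hτ)).hasDerivWithinAt)
    (fun τ hτ => by
      have h := (hLMI τ (interior_subset hτ)).dotProduct_mulVec_nonneg (exp (τ • A) *ᵥ y)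
      rwa [star_trivial, neg_mulVec, dotProduct_neg, neg_nonneg] at h)
  simpa using hanti (left_mem_Icc.2 hθ) (right_mem_Icc.2 hθ) hθ

theorem posSemidef_sub_exp_smul_transpose_mul_mul {A : Matrix m m ℝ} {R R' : ℝ → Matrix m m ℝ}
    {θ : ℝ} (hθ : 0 ≤ θ) (hR : ∀ τ ∈ Icc 0 θ, HasDerivAt R (R' τ) τ)
    (hLMI : ∀ τ ∈ Icc 0 θ, (-(R' τ + Aᵀ * R τ + R τ * A)).PosSemidef)
    (hR₀ : (R 0).IsHermitian) (hRθ : (R θ).IsHermitian) :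
    (R 0 - exp (θ • Aᵀ) * R θ * exp (θ • A)).PosSemidef := by
  rw [← transpose_smul, exp_transpose, ← conjTranspose_eq_transpose_of_trivial]
  refine .of_dotProduct_mulVec_nonneg (hR₀.sub (isHermitian_conjTranspose_mul_mul _ hRθ))
    fun y => ?_
  rw [star_trivial, sub_mulVec, dotProduct_sub, sub_nonneg, ← mulVec_mulVec, ← mulVec_mulVec,
    dotProduct_mulVec, conjTranspose_eq_transpose_of_trivial, vecMul_transpose]
  exact dotProduct_mulVec_exp_smul_le hθ hR hLMI y

attribute [local instance] Matrix.normedAddCommGroup Matrix.normedSpace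

theorem stmt5_general {n : ℕ} (Tmin Tmax : ℝ) (hT : 0 < Tmin)
    (A J : Matrix (Fin n) (Fin n) ℝ)
    (P : Matrix (Fin n) (Fin n) ℝ)
    (S S' : ℝ → Matrix (Fin n) (Fin n) ℝ)
    (hderiv : ∀ τ ∈ Icc (0 : ℝ) Tmax, HasDerivAt S (S' τ) τ)
    (hsymm : ∀ τ ∈ Icc (0 : ℝ) Tmax, (S τ).IsHermitian)
    (hLMI : ∀ τ ∈ Icc (0 : ℝ) Tmax,
      (-( -(S' τ) + Aᵀ * S τ + S τ * A)).PosSemidef)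
    (Q : Matrix (Fin n) (Fin n) ℝ)
    (hQS : (S 0 - Q).PosSemidef)
    (ε : ℝ) (hε : 0 < ε)
    (hSθ : ∀ θ ∈ Icc Tmin Tmax,
      (P - (Jᵀ * S θ * J + ε • (1 : Matrix (Fin n) (Fin n) ℝ))).PosSemidef) :
    ∀ θ ∈ Icc Tmin Tmax,
      (P - Jᵀ * (NormedSpace.exp (θ • Aᵀ) * Q * NormedSpace.exp (θ • A)) * J).PosDef := by
  intro θ hθ
  have hθ₀ : 0 ≤ θ := hT.le.trans hθ.1
  have hrev : ∀ τ ∈ Icc 0 θ, θ - τ ∈ Icc 0 Tmax := fun τ hτ =>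
    ⟨by linarith [hτ.2], by linarith [hτ.1, hθ.2]⟩
  have hdecay : (S θ - exp (θ • Aᵀ) * S 0 * exp (θ • A)).PosSemidef := by
    simpa using posSemidef_sub_exp_smul_transpose_mul_mul (R := fun τ => S (θ - τ))
      (R' := fun τ => -S' (θ - τ)) hθ₀
      (fun τ hτ => (hderiv _ (hrev τ hτ)).comp_const_sub θ τ)
      (fun τ hτ => hLMI _ (hrev τ hτ))
      (by simpa using hsymm θ ⟨hθ₀, hθ.2⟩) (by simpa using hsymm 0 ⟨le_rfl, hθ₀.trans hθ.2⟩)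
  have hQE : (exp (θ • Aᵀ) * (S 0 - Q) * exp (θ • A)).PosSemidef := by
    rw [← transpose_smul, exp_transpose, ← conjTranspose_eq_transpose_of_trivial]
    exact hQS.conjTranspose_mul_mul_same _
  have hJ : (Jᵀ * (S θ - exp (θ • Aᵀ) * Q * exp (θ • A)) * J).PosSemidef := by
    rw [← conjTranspose_eq_transpose_of_trivial]
    convert (hdecay.add hQE).conjTranspose_mul_mul_same J using 2
    noncomm_ring
  have hsplit : P - Jᵀ * (exp (θ • Aᵀ) * Q * exp (θ • A)) * J
      = (P - (Jᵀ * S θ * J + ε • 1)) + Jᵀ * (S θ - exp (θ • Aᵀ) * Q * exp (θ • A)) * J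
        + ε • 1 := by
    noncomm_ring
  rw [hsplit]
  exact PosDef.posSemidef_add ((hSθ θ hθ).add hJ) (PosDef.one.smul hε)

/-- Implication (b) ⇒ (a) in Theorem 2: the clock-dependent conditions imply
the strict dwell-time condition `Jᵀ e^{Aᵀθ} Q e^{Aθ} J - P ≺ 0` on
`[T_min, T_max]`. -/
theorem stmt5 {n : ℕ} (Tmin Tmax : ℝ) (hT : 0 < Tmin) (hTT : Tmin ≤ Tmax)
    (A J : Matrix (Fin n) (Fin n) ℝ)
    (P : Matrix (Fin n) (Fin n) ℝ) (hP : P.PosDef)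
    (S S' : ℝ → Matrix (Fin n) (Fin n) ℝ)
    (hderiv : ∀ τ ∈ Icc (0 : ℝ) Tmax, HasDerivAt S (S' τ) τ)
    (hsymm : ∀ τ ∈ Icc (0 : ℝ) Tmax, (S τ).IsHermitian)
    (hLMI : ∀ τ ∈ Icc (0 : ℝ) Tmax,
      (-( -(S' τ) + Aᵀ * S τ + S τ * A)).PosSemidef)
    (Q : Matrix (Fin n) (Fin n) ℝ) (hQ : Q.IsHermitian)
    (hQS : (S 0 - Q).PosSemidef)
    (ε : ℝ) (hε : 0 < ε)
    (hSθ : ∀ θ ∈ Icc Tmin Tmax,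
      (P - (Jᵀ * S θ * J + ε • (1 : Matrix (Fin n) (Fin n) ℝ))).PosSemidef) :
    ∀ θ ∈ Icc Tmin Tmax,
      (P - Jᵀ * (NormedSpace.exp (θ • Aᵀ) * Q * NormedSpace.exp (θ • A)) * J).PosDef :=
  stmt5_general Tmin Tmax hT A J P S S' hderiv hsymm hLMI Q hQS ε hε hSθ
end
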